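/- Local controllability with control constraints: Let A be an n×n real matrix, B an n×m real matrix, and Ω ⊆ ℝᵐ a measurable set with 0 in its interior. For x₀ ∈ ℝⁿ and T > 0 define the accessible set Acc_Ω(x₀,T) = { e^{TA}x₀ + ∫₀^T e^{(T−t)A} B u(t) dt : u : [0,T] → ℝᵐ measurable with u(t) ∈ Ω for a.e. t }. If the Kalman matrix K(A,B) has rank n, then for every x₀ ∈ ℝⁿ and every T > 0, the point e^{TA}x₀ belongs to the interior of Acc_Ω(x₀,T). Conversely, if e^{TA}x₀ belongs to the interior of Acc_Ω(x₀,T) for some x₀ ∈ ℝⁿ and some T > 0, then K(A,B) has rank n. -/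

import Mathlib

open MeasureTheory Matrix Set NormedSpace

/-- The Kalman matrix `K(A,B) = (B, AB, …, A^{n−1}B)` of the pair `(A,B)`. -/
noncomputable def kalmanMatrix {n m : ℕ} (A : Matrix (Fin n) (Fin n) ℝ)
    (B : Matrix (Fin n) (Fin m) ℝ) : Matrix (Fin n) (Fin n × Fin m) ℝ :=
  Matrix.of fun i p => (A ^ (p.1 : ℕ) * B) i p.2

/-- The accessible set `Acc_Ω(x₀,T)` of the system `ẋ = Ax + Bu`, `u(t) ∈ Ω` a.e.,
with measurable essentially bounded controls. -/
def accSet {n m : ℕ} (A : Matrix (Fin n) (Fin n) ℝ) (B : Matrix (Fin n) (Fin m) ℝ)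
    (Ω : Set (Fin m → ℝ)) (x₀ : Fin n → ℝ) (T : ℝ) : Set (Fin n → ℝ) :=
  { y | ∃ u : ℝ → Fin m → ℝ,
      AEStronglyMeasurable u (volume.restrict (Set.Icc 0 T)) ∧
      (∃ C : ℝ, ∀ᵐ t ∂volume.restrict (Set.Icc 0 T), ‖u t‖ ≤ C) ∧
      (∀ᵐ t ∂volume.restrict (Set.Icc 0 T), u t ∈ Ω) ∧
      y = NormedSpace.exp (T • A) *ᵥ x₀ + ∫ t in (0:ℝ)..T, NormedSpace.exp ((T - t) • A) *ᵥ (B *ᵥ u t) }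

namespace LocCtrl

variable {n m : ℕ}

section MatNorm

attribute [local instance] Matrix.linftyOpNormedAddCommGroup Matrix.linftyOpNormedSpace
  Matrix.linftyOpNormedRing Matrix.linftyOpNormedAlgebra

variable (A : Matrix (Fin n) (Fin n) ℝ) (B : Matrix (Fin n) (Fin m) ℝ)

/-- continuity of `t ↦ exp((T-t)•A)` -/
lemma cont_expCurve (T : ℝ) : Continuous fun t : ℝ => NormedSpace.exp ((T - t) • A) :=
  exp_continuous.comp ((continuous_const.sub continuous_id).smul continuous_const)

lemma vecMul_smulMat {k : ℕ} (ψ : Fin n → ℝ) (r : ℝ) (M : Matrix (Fin n) (Fin k) ℝ) :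
    ψ ᵥ* (r • M) = r • (ψ ᵥ* M) := by
  ext j
  simp [Matrix.vecMul, dotProduct, Finset.mul_sum, mul_left_comm]

/-- the linear map `M ↦ ψ ᵥ* (M * C)` as a CLM -/
noncomputable def vecMulCLM (ψ : Fin n → ℝ) (C : Matrix (Fin n) (Fin m) ℝ) :
    Matrix (Fin n) (Fin n) ℝ →L[ℝ] (Fin m → ℝ) :=
  LinearMap.toContinuousLinearMap
    { toFun := fun M => ψ ᵥ* (M * C)
      map_add' := fun M N => by simp only [Matrix.add_mul, Matrix.vecMul_add]
      map_smul' := fun r M => by simp only [Matrix.smul_mul, vecMul_smulMat, RingHom.id_apply] }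

@[simp] lemma vecMulCLM_apply (ψ : Fin n → ℝ) (C : Matrix (Fin n) (Fin m) ℝ)
    (M : Matrix (Fin n) (Fin n) ℝ) : vecMulCLM ψ C M = ψ ᵥ* (M * C) := rfl

lemma deriv_vecMul (ψ : Fin n → ℝ) (C : Matrix (Fin n) (Fin m) ℝ) (s : ℝ) :
    HasDerivAt (fun s : ℝ => ψ ᵥ* (NormedSpace.exp (s • A) * C))
      (ψ ᵥ* (NormedSpace.exp (s • A) * (A * C))) s := by
  have h1 : HasDerivAt (fun u : ℝ => NormedSpace.exp (u • A)) (A * NormedSpace.exp (s • A)) s :=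
    hasDerivAt_exp_smul_const' A s
  have h2 := ((vecMulCLM ψ C).hasFDerivAt (x := NormedSpace.exp (s • A))).comp_hasDerivAt s h1
  have hc : A * NormedSpace.exp (s • A) = NormedSpace.exp (s • A) * A :=
    (((Commute.refl A).smul_right s).exp_right).eq
  have h3 : (⇑(vecMulCLM ψ C) ∘ fun u : ℝ => NormedSpace.exp (u • A)) = fun s : ℝ => ψ ᵥ* (NormedSpace.exp (s • A) * C) := rfl
  rw [h3] at h2
  rw [hc] at h2
  rw [← Matrix.mul_assoc]
  exact h2

lemma exp_vecMul_zero (ψ : Fin n → ℝ) (hall : ∀ k : ℕ, ψ ᵥ* (A ^ k * B) = 0) (s : ℝ) :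
    ψ ᵥ* (NormedSpace.exp (s • A) * B) = 0 := by
  have hsum : Summable fun k : ℕ => (Nat.factorial k : ℝ)⁻¹ • (s • A) ^ k :=
    expSeries_summable' (𝕂 := ℝ) (s • A)
  have h1 : ψ ᵥ* (NormedSpace.exp (s • A) * B) = vecMulCLM ψ B (NormedSpace.exp (s • A)) := rfl
  rw [h1, exp_eq_tsum (𝕂 := ℝ), ContinuousLinearMap.map_tsum _ hsum]
  have : ∀ k : ℕ, vecMulCLM ψ B ((Nat.factorial k : ℝ)⁻¹ • (s • A) ^ k) = 0 := by
    intro k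
    rw [_root_.map_smul, vecMulCLM_apply, smul_pow, Matrix.smul_mul, vecMul_smulMat,
      hall k]
    simp
  simp [this]

/-- Uniform operator bound for `ψ ↦ Bᵀ *ᵥ (exp((T-t)•A)ᵀ *ᵥ ψ)` over `t ∈ [0,T]`. -/
lemma opBound (T : ℝ) : ∃ C : ℝ, 0 ≤ C ∧ ∀ t ∈ Icc (0:ℝ) T, ∀ ψ : Fin n → ℝ,
    ‖Bᵀ *ᵥ ((NormedSpace.exp ((T - t) • A))ᵀ *ᵥ ψ)‖ ≤ C * ‖ψ‖ := by
  have hΦcont : Continuous fun M : Matrix (Fin m) (Fin n) ℝ =>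
      LinearMap.toContinuousLinearMap (Matrix.mulVecLin M) := by
    have : IsLinearMap ℝ fun M : Matrix (Fin m) (Fin n) ℝ =>
        LinearMap.toContinuousLinearMap (Matrix.mulVecLin M) := by
      constructor
      · intro M N; ext v; simp [Matrix.add_mulVec]
      · intro r M; ext v; simp [Matrix.smul_mulVec]
    exact (this.mk' _).continuous_of_finiteDimensional
  have hMcont : Continuous fun t : ℝ => Bᵀ * (NormedSpace.exp ((T - t) • A))ᵀ :=
    continuous_const.matrix_mul (cont_expCurve A T).matrix_transpose
  have hg : ContinuousOn (fun t : ℝ =>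
      LinearMap.toContinuousLinearMap (Matrix.mulVecLin (Bᵀ * (NormedSpace.exp ((T - t) • A))ᵀ)))
      (Icc 0 T) := (hΦcont.comp hMcont).continuousOn
  obtain ⟨C, hC⟩ := isCompact_Icc.exists_bound_of_continuousOn hg
  refine ⟨max C 0, le_max_right _ _, fun t ht ψ => ?_⟩
  set L := LinearMap.toContinuousLinearMap (Matrix.mulVecLin (Bᵀ * (NormedSpace.exp ((T - t) • A))ᵀ))
    with hL
  have h1 : Bᵀ *ᵥ ((NormedSpace.exp ((T - t) • A))ᵀ *ᵥ ψ) = L ψ := by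
    rw [hL]
    simp only [LinearMap.coe_toContinuousLinearMap', Matrix.mulVecLin_apply,
      ← Matrix.mulVec_mulVec]
  rw [h1]
  have h2 : ‖L ψ‖ ≤ ‖L‖ * ‖ψ‖ := ContinuousLinearMap.le_opNorm _ _
  have h3 : ‖L‖ ≤ max C 0 := le_max_of_le_left (hC t ht)
  calc ‖L ψ‖ ≤ ‖L‖ * ‖ψ‖ := h2
    _ ≤ max C 0 * ‖ψ‖ := by gcongr

end MatNorm

lemma vecMul_kalman_apply (A : Matrix (Fin n) (Fin n) ℝ) (B : Matrix (Fin n) (Fin m) ℝ)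
    (φ : Fin n → ℝ) (p : Fin n × Fin m) :
    (φ ᵥ* kalmanMatrix A B) p = (φ ᵥ* (A ^ (p.1 : ℕ) * B)) p.2 := by
  simp [Matrix.vecMul, dotProduct, kalmanMatrix]

/-- Full Kalman rank implies: a vector orthogonal to all `A^k B` is zero. -/
lemma eq_zero_of_kalman_rank (A : Matrix (Fin n) (Fin n) ℝ) (B : Matrix (Fin n) (Fin m) ℝ)
    (hrank : (kalmanMatrix A B).rank = n) (φ : Fin n → ℝ)
    (h : ∀ k : ℕ, φ ᵥ* (A ^ k * B) = 0) : φ = 0 := by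
  have htop : LinearMap.range (kalmanMatrix A B).mulVecLin = ⊤ := by
    apply Submodule.eq_top_of_finrank_eq
    rw [show Module.finrank ℝ ↥(LinearMap.range (kalmanMatrix A B).mulVecLin)
        = (kalmanMatrix A B).rank from rfl, hrank, Module.finrank_pi]
    simp
  obtain ⟨x, hx⟩ := LinearMap.range_eq_top.mp htop φ
  have hker : φ ᵥ* kalmanMatrix A B = 0 := by
    funext p
    rw [vecMul_kalman_apply, h (p.1 : ℕ)]
    rfl
  have : φ ⬝ᵥ φ = 0 := by
    nth_rewrite 2 [← hx]
    rw [Matrix.mulVecLin_apply, Matrix.dotProduct_mulVec, hker, zero_dotProduct]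
  exact dotProduct_self_eq_zero.mp this

/-- If `ψ ᵥ* (exp(s•A) B) = 0` on `(0,T)` and the Kalman condition holds, `ψ = 0`. -/
lemma eq_zero_of_exp_vanish (A : Matrix (Fin n) (Fin n) ℝ) (B : Matrix (Fin n) (Fin m) ℝ)
    (hrank : (kalmanMatrix A B).rank = n) {T : ℝ} (hT : 0 < T) (ψ : Fin n → ℝ)
    (h : ∀ s ∈ Ioo (0:ℝ) T, ψ ᵥ* (NormedSpace.exp (s • A) * B) = 0) : ψ = 0 := by
  have claim : ∀ k : ℕ, ∀ s ∈ Ioo (0:ℝ) T, ψ ᵥ* (NormedSpace.exp (s • A) * (A ^ k * B)) = 0 := by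
    intro k
    induction k with
    | zero => simpa using h
    | succ k ih =>
      intro s hs
      have hev : (fun s' : ℝ => ψ ᵥ* (NormedSpace.exp (s' • A) * (A ^ k * B)))
          =ᶠ[nhds s] fun _ => (0 : Fin m → ℝ) :=
        Filter.eventuallyEq_of_mem (isOpen_Ioo.mem_nhds hs) ih
      have d1 := deriv_vecMul A ψ (A ^ k * B) s
      have d2 : HasDerivAt (fun s' : ℝ => ψ ᵥ* (NormedSpace.exp (s' • A) * (A ^ k * B)))
          (0 : Fin m → ℝ) s :=
        (hasDerivAt_const s (0 : Fin m → ℝ)).congr_of_eventuallyEq hev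
      have h0 := d2.unique d1
      simpa [pow_succ', Matrix.mul_assoc] using h0.symm
  set s₀ : ℝ := T / 2 with hs₀def
  have hs₀ : s₀ ∈ Ioo (0:ℝ) T := ⟨half_pos hT, half_lt_self hT⟩
  have hφ : ∀ k : ℕ, (ψ ᵥ* NormedSpace.exp (s₀ • A)) ᵥ* (A ^ k * B) = 0 := fun k => by
    rw [Matrix.vecMul_vecMul]
    exact claim k s₀ hs₀
  have hφ0 : ψ ᵥ* NormedSpace.exp (s₀ • A) = 0 := eq_zero_of_kalman_rank A B hrank _ hφ
  have hinv : NormedSpace.exp (s₀ • A) * NormedSpace.exp ((-s₀) • A) = 1 := by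
    rw [← Matrix.exp_add_of_commute _ _ (((Commute.refl A).smul_left s₀).smul_right (-s₀)),
      ← add_smul]
    simp
  calc ψ = ψ ᵥ* (1 : Matrix (Fin n) (Fin n) ℝ) := (Matrix.vecMul_one ψ).symm
    _ = (ψ ᵥ* NormedSpace.exp (s₀ • A)) ᵥ* NormedSpace.exp ((-s₀) • A) := by rw [Matrix.vecMul_vecMul, hinv]
    _ = 0 := by rw [hφ0, Matrix.zero_vecMul]


variable (A : Matrix (Fin n) (Fin n) ℝ) (B : Matrix (Fin n) (Fin m) ℝ)

/-- Gramian integrand. -/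
noncomputable def gInt (T t : ℝ) (ψ : Fin n → ℝ) : Fin n → ℝ :=
  NormedSpace.exp ((T - t) • A) *ᵥ (B *ᵥ (Bᵀ *ᵥ ((NormedSpace.exp ((T - t) • A))ᵀ *ᵥ ψ)))

lemma cont_gInt (T : ℝ) (ψ : Fin n → ℝ) : Continuous fun t => gInt A B T t ψ := by
  have hE := cont_expCurve A T
  exact hE.matrix_mulVec (continuous_const.matrix_mulVec
    (continuous_const.matrix_mulVec (hE.matrix_transpose.matrix_mulVec continuous_const)))

lemma gInt_add (T t : ℝ) (ψ φ : Fin n → ℝ) :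
    gInt A B T t (ψ + φ) = gInt A B T t ψ + gInt A B T t φ := by
  simp [gInt, Matrix.mulVec_add]

lemma gInt_smul (T t : ℝ) (r : ℝ) (ψ : Fin n → ℝ) :
    gInt A B T t (r • ψ) = r • gInt A B T t ψ := by
  simp [gInt, Matrix.mulVec_smul]

/-- The controllability Gramian as a linear endomorphism. -/
noncomputable def gram (T : ℝ) : (Fin n → ℝ) →ₗ[ℝ] (Fin n → ℝ) where
  toFun := fun ψ => ∫ t in (0:ℝ)..T, gInt A B T t ψ
  map_add' := fun ψ φ => by
    simp only [gInt_add]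
    exact intervalIntegral.integral_add ((cont_gInt A B T ψ).intervalIntegrable 0 T)
      ((cont_gInt A B T φ).intervalIntegrable 0 T)
  map_smul' := fun r ψ => by
    simp only [gInt_smul, RingHom.id_apply]
    exact intervalIntegral.integral_smul r _

/-- dot product with a fixed vector, as a CLM. -/
noncomputable def dotCLM (ψ : Fin n → ℝ) : (Fin n → ℝ) →L[ℝ] ℝ :=
  LinearMap.toContinuousLinearMap
    { toFun := fun v => ψ ⬝ᵥ v
      map_add' := fun a b => dotProduct_add ψ a b
      map_smul' := fun r a => by simp [dotProduct_smul] }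

@[simp] lemma dotCLM_apply (ψ v : Fin n → ℝ) : dotCLM ψ v = ψ ⬝ᵥ v := rfl

lemma dot_gInt (T t : ℝ) (ψ : Fin n → ℝ) :
    ψ ⬝ᵥ gInt A B T t ψ
      = (Bᵀ *ᵥ ((NormedSpace.exp ((T - t) • A))ᵀ *ᵥ ψ)) ⬝ᵥ (Bᵀ *ᵥ ((NormedSpace.exp ((T - t) • A))ᵀ *ᵥ ψ)) := by
  simp [gInt, Matrix.dotProduct_mulVec, Matrix.mulVec_transpose, Matrix.vecMul_vecMul]

lemma gram_inj (hrank : (kalmanMatrix A B).rank = n) {T : ℝ} (hT : 0 < T) :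
    Function.Injective (gram A B T) := by
  rw [← LinearMap.ker_eq_bot, Submodule.eq_bot_iff]
  intro ψ hψ
  rw [LinearMap.mem_ker] at hψ
  set v : ℝ → Fin m → ℝ := fun t => Bᵀ *ᵥ ((NormedSpace.exp ((T - t) • A))ᵀ *ᵥ ψ) with hv
  have hvcont : Continuous v := continuous_const.matrix_mulVec
    ((cont_expCurve A T).matrix_transpose.matrix_mulVec continuous_const)
  have hfcont : Continuous fun t => v t ⬝ᵥ v t := by
    have : Continuous fun w : Fin n → ℝ × (Fin n → ℝ) => True := by exact continuous_const
    exact continuous_finset_sum _ fun i _ => ((continuous_apply i).comp hvcont).mul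
      ((continuous_apply i).comp hvcont)
  have hzero : ∫ t in (0:ℝ)..T, v t ⬝ᵥ v t = 0 := by
    have h1 : ψ ⬝ᵥ gram A B T ψ = 0 := by rw [hψ, dotProduct_zero]
    have h2 : ψ ⬝ᵥ gram A B T ψ = ∫ t in (0:ℝ)..T, v t ⬝ᵥ v t := by
      have h3 : (gram A B T) ψ = ∫ t in (0:ℝ)..T, gInt A B T t ψ := rfl
      rw [h3, ← dotCLM_apply,
        ← ContinuousLinearMap.intervalIntegral_comp_comm _ ((cont_gInt A B T ψ).intervalIntegrable 0 T)]
      refine intervalIntegral.integral_congr fun t _ => ?_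
      rw [dotCLM_apply, dot_gInt]
    rw [← h2, h1]
  have hae := (intervalIntegral.integral_eq_zero_iff_of_nonneg_ae (by
      filter_upwards with t using Finset.sum_nonneg fun i _ => mul_self_nonneg _)
      ((hfcont.intervalIntegrable 0 T))).mp hzero
  -- continuous + a.e. zero on `Ioc 0 T ∪ Ioc T 0` implies zero on `Ioo 0 T`
  have hIoo : ∀ t ∈ Ioo (0:ℝ) T, v t ⬝ᵥ v t = 0 := by
    intro t ht
    by_contra hne
    set U : Set ℝ := Ioo 0 T ∩ {x | v x ⬝ᵥ v x ≠ 0} with hU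
    have hUopen : IsOpen U := isOpen_Ioo.inter (isOpen_ne.preimage hfcont)
    have hUne : U.Nonempty := ⟨t, ht, hne⟩
    have hUpos : 0 < volume U := hUopen.measure_pos volume hUne
    have hU0 : volume U = 0 := by
      have := Filter.eventuallyEq_iff_exists_mem.mp hae
      rw [Filter.EventuallyEq, ae_iff] at hae
      rw [Measure.restrict_apply₀' (by measurability)] at hae
      refine le_antisymm (le_trans (measure_mono ?_) hae.le) bot_le
      intro x hx
      exact ⟨hx.2, Or.inl ⟨hx.1.1, hx.1.2.le⟩⟩
    exact absurd hU0 hUpos.ne'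
  -- transfer to `ψ ᵥ* (exp (s•A) * B) = 0` on `Ioo 0 T`
  have hvan : ∀ s ∈ Ioo (0:ℝ) T, ψ ᵥ* (NormedSpace.exp (s • A) * B) = 0 := by
    intro s hs
    have hts : T - s ∈ Ioo (0:ℝ) T := ⟨by linarith [hs.2], by linarith [hs.1]⟩
    have h0 : v (T - s) = 0 :=
      dotProduct_self_eq_zero.mp (hIoo (T - s) hts)
    have : T - (T - s) = s := by ring
    rw [hv] at h0
    simp only [this] at h0
    rw [← h0]
    rw [Matrix.mulVec_mulVec, ← Matrix.transpose_mul, Matrix.mulVec_transpose]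
  exact eq_zero_of_exp_vanish A B hrank hT ψ hvan


lemma forward_dir (hrank : (kalmanMatrix A B).rank = n) (Ω : Set (Fin m → ℝ))
    (hΩ : (0 : Fin m → ℝ) ∈ interior Ω) (x₀ : Fin n → ℝ) {T : ℝ} (hT : 0 < T) :
    NormedSpace.exp (T • A) *ᵥ x₀ ∈ interior (accSet A B Ω x₀ T) := by
  obtain ⟨ε, εpos, hball⟩ := Metric.mem_nhds_iff.mp (mem_interior_iff_mem_nhds.mp hΩ)
  obtain ⟨C₁, hC₁0, hC₁⟩ := opBound A B T
  have hinj := gram_inj A B hrank hT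
  have hbij : Function.Bijective (gram A B T) :=
    ⟨hinj, LinearMap.injective_iff_surjective.mp hinj⟩
  set e := LinearEquiv.ofBijective (gram A B T) hbij with he
  set S := LinearMap.toContinuousLinearMap (e.symm : (Fin n → ℝ) →ₗ[ℝ] (Fin n → ℝ)) with hS
  set C₂ : ℝ := ‖S‖ with hC₂
  have hC₂0 : 0 ≤ C₂ := norm_nonneg _
  set K : ℝ := (C₁ + 1) * (C₂ + 1) with hK
  have hKpos : 0 < K := by positivity
  set δ : ℝ := ε / K with hδ
  have hδpos : 0 < δ := div_pos εpos hKpos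
  set c : Fin n → ℝ := NormedSpace.exp (T • A) *ᵥ x₀ with hc
  have hsub : Metric.ball c δ ⊆ accSet A B Ω x₀ T := by
    intro y hy
    set ψ : Fin n → ℝ := e.symm (y - c) with hψ
    set u : ℝ → Fin m → ℝ := fun t => Bᵀ *ᵥ ((NormedSpace.exp ((T - t) • A))ᵀ *ᵥ ψ) with hu
    have hucont : Continuous u := continuous_const.matrix_mulVec
      ((cont_expCurve A T).matrix_transpose.matrix_mulVec continuous_const)
    have hψbound : ‖ψ‖ ≤ C₂ * ‖y - c‖ := by
      have : ψ = S (y - c) := rfl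
      rw [this]
      exact S.le_opNorm _
    have hubound : ∀ t ∈ Icc (0:ℝ) T, ‖u t‖ ≤ K * ‖y - c‖ := by
      intro t ht
      calc ‖u t‖ ≤ C₁ * ‖ψ‖ := hC₁ t ht ψ
        _ ≤ C₁ * (C₂ * ‖y - c‖) := by
            apply mul_le_mul_of_nonneg_left hψbound hC₁0
        _ ≤ K * ‖y - c‖ := by
            rw [hK, ← mul_assoc]
            apply mul_le_mul_of_nonneg_right _ (norm_nonneg _)
            nlinarith
    have hdist : ‖y - c‖ < δ := by
      rw [← dist_eq_norm]
      exact Metric.mem_ball.mp hy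
    refine ⟨u, hucont.aestronglyMeasurable, ⟨K * ‖y - c‖, ?_⟩, ?_, ?_⟩
    · filter_upwards [ae_restrict_mem measurableSet_Icc] with t ht
      exact hubound t ht
    · filter_upwards [ae_restrict_mem measurableSet_Icc] with t ht
      apply hball
      rw [Metric.mem_ball, dist_zero_right]
      calc ‖u t‖ ≤ K * ‖y - c‖ := hubound t ht
        _ < K * δ := by exact mul_lt_mul_of_pos_left hdist hKpos
        _ = ε := by rw [hδ]; field_simp
    · have hint : (∫ t in (0:ℝ)..T, NormedSpace.exp ((T - t) • A) *ᵥ (B *ᵥ u t)) = gram A B T ψ := rfl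
      rw [hint]
      have : gram A B T ψ = y - c := e.apply_symm_apply (y - c)
      rw [this]
      abel
  exact mem_interior.mpr ⟨Metric.ball c δ, hsub, Metric.isOpen_ball, Metric.mem_ball_self hδpos⟩

lemma converse_dir (Ω : Set (Fin m → ℝ)) (x₀ : Fin n → ℝ) {T : ℝ} (hT : 0 < T)
    (hmem : NormedSpace.exp (T • A) *ᵥ x₀ ∈ interior (accSet A B Ω x₀ T)) :
    (kalmanMatrix A B).rank = n := by
  by_contra hne
  have hle : (kalmanMatrix A B).rank ≤ n :=
    (kalmanMatrix A B).rank_le_card_height.trans (by simp)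
  have hlt : (kalmanMatrix A B).rank < n := lt_of_le_of_ne hle hne
  -- produce a nonzero `ψ` annihilating the Kalman matrix
  set lin := ((kalmanMatrix A B)ᵀ).mulVecLin with hlin
  have hrk : Module.finrank ℝ (LinearMap.range lin) = (kalmanMatrix A B).rank := by
    rw [hlin]
    exact Matrix.rank_transpose (kalmanMatrix A B)
  have hker : LinearMap.ker lin ≠ ⊥ := by
    intro hbot
    have h1 := LinearMap.finrank_range_add_finrank_ker lin
    rw [hbot, finrank_bot, add_zero, hrk, Module.finrank_pi] at h1
    simp at h1
    omega
  obtain ⟨ψ, hψmem, hψne⟩ := Submodule.ne_bot_iff _ |>.mp hker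
  have hψK : ψ ᵥ* kalmanMatrix A B = 0 := by
    have := LinearMap.mem_ker.mp hψmem
    rwa [hlin, Matrix.mulVecLin_apply, Matrix.mulVec_transpose] at this
  have hψk : ∀ k : ℕ, k < n → ψ ᵥ* (A ^ k * B) = 0 := by
    intro k hk
    funext j
    have := congrFun hψK (⟨k, hk⟩, j)
    rw [vecMul_kalman_apply] at this
    simpa using this
  -- extend to all `k` via Cayley-Hamilton
  have hn1 : 0 < n := by omega
  have hall : ∀ k : ℕ, ψ ᵥ* (A ^ k * B) = 0 := by
    intro k
    set lm : Matrix (Fin n) (Fin m) ℝ →ₗ[ℝ] (Fin m → ℝ) :=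
      { toFun := fun M => ψ ᵥ* M
        map_add' := fun M N => by simp [Matrix.vecMul_add]
        map_smul' := fun r M => by simp [vecMul_smulMat] } with hlm
    have hdeg : (Polynomial.X ^ k %ₘ A.charpoly).natDegree < n := by
      have hne1 : A.charpoly ≠ 1 := by
        intro h1
        have := A.charpoly_natDegree_eq_dim
        rw [h1] at this
        simp [Fintype.card_fin] at this
        omega
      have := Polynomial.natDegree_modByMonic_lt (Polynomial.X ^ k) A.charpoly_monic hne1
      rwa [A.charpoly_natDegree_eq_dim, Fintype.card_fin] at this
    have hpow : A ^ k = Polynomial.aeval A (Polynomial.X ^ k %ₘ A.charpoly) :=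
      Matrix.pow_eq_aeval_mod_charpoly A k
    rw [hpow, Polynomial.aeval_eq_sum_range' hdeg]
    have hsum : (∑ i ∈ Finset.range n, (Polynomial.X ^ k %ₘ A.charpoly).coeff i • A ^ i) * B
        = ∑ i ∈ Finset.range n, (Polynomial.X ^ k %ₘ A.charpoly).coeff i • (A ^ i * B) := by
      rw [Matrix.sum_mul]
      congr 1
      funext i
      rw [Matrix.smul_mul]
    rw [hsum]
    have : ψ ᵥ* (∑ i ∈ Finset.range n, (Polynomial.X ^ k %ₘ A.charpoly).coeff i • (A ^ i * B))
        = lm (∑ i ∈ Finset.range n, (Polynomial.X ^ k %ₘ A.charpoly).coeff i • (A ^ i * B)) := rfl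
    rw [this, map_sum]
    refine Finset.sum_eq_zero fun i hi => ?_
    rw [_root_.map_smul]
    have : lm (A ^ i * B) = 0 := hψk i (Finset.mem_range.mp hi)
    rw [this, smul_zero]
  have hexp : ∀ s : ℝ, ψ ᵥ* (NormedSpace.exp (s • A) * B) = 0 := exp_vecMul_zero A B ψ hall
  -- the accessible set lies in a hyperplane
  set c : Fin n → ℝ := NormedSpace.exp (T • A) *ᵥ x₀ with hc
  have hplane : accSet A B Ω x₀ T ⊆ {y | ψ ⬝ᵥ y = ψ ⬝ᵥ c} := by
    rintro y ⟨u, hmeas, hbdd, hmemΩ, hy⟩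
    have hdot : ψ ⬝ᵥ (∫ t in (0:ℝ)..T, NormedSpace.exp ((T - t) • A) *ᵥ (B *ᵥ u t)) = 0 := by
      by_cases hint : IntervalIntegrable (fun t => NormedSpace.exp ((T - t) • A) *ᵥ (B *ᵥ u t)) volume 0 T
      · rw [← dotCLM_apply, ← ContinuousLinearMap.intervalIntegral_comp_comm _ hint]
        have hzero : ∀ t : ℝ, dotCLM ψ (NormedSpace.exp ((T - t) • A) *ᵥ (B *ᵥ u t)) = 0 := by
          intro t
          rw [dotCLM_apply, Matrix.dotProduct_mulVec, Matrix.dotProduct_mulVec,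
            Matrix.vecMul_vecMul, hexp (T - t), zero_dotProduct]
        simp only [hzero, intervalIntegral.integral_zero]
      · rw [intervalIntegral.integral_undef hint, dotProduct_zero]
    rw [Set.mem_setOf_eq, hy, dotProduct_add, hdot, add_zero]
  have hcint : c ∈ interior {y | ψ ⬝ᵥ y = ψ ⬝ᵥ c} := interior_mono hplane hmem
  obtain ⟨r, rpos, hrball⟩ := Metric.mem_nhds_iff.mp (mem_interior_iff_mem_nhds.mp hcint)
  set a : ℝ := r / (2 * (‖ψ‖ + 1)) with ha
  have hapos : 0 < a := by positivity
  have hmem2 : c + a • ψ ∈ {y | ψ ⬝ᵥ y = ψ ⬝ᵥ c} := by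
    apply hrball
    rw [Metric.mem_ball, dist_eq_norm, add_sub_cancel_left, norm_smul, Real.norm_eq_abs,
      abs_of_pos hapos]
    have h1 : ‖ψ‖ < ‖ψ‖ + 1 := by linarith
    calc a * ‖ψ‖ ≤ a * (‖ψ‖ + 1) := by nlinarith [norm_nonneg ψ]
      _ = r / 2 := by rw [ha]; field_simp
      _ < r := by linarith
  have heq : ψ ⬝ᵥ (c + a • ψ) = ψ ⬝ᵥ c := hmem2
  rw [dotProduct_add, dotProduct_smul, smul_eq_mul] at heq
  have h0 : a * (ψ ⬝ᵥ ψ) = 0 := by linarith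
  have : ψ ⬝ᵥ ψ = 0 := by
    rcases mul_eq_zero.mp h0 with h | h
    · exact absurd h hapos.ne'
    · exact h
  exact hψne (dotProduct_self_eq_zero.mp this)

end LocCtrl

/-- **Local controllability under control constraints**: if `Ω ⊆ ℝᵐ` is measurable with
`0` in its interior, then the Kalman condition `rank K(A,B) = n` implies that for every
`x₀` and every `T > 0` the point `e^{TA}x₀` lies in the interior of the accessible set
`Acc_Ω(x₀,T)`; conversely, if this holds for some `x₀` and some `T > 0`, then the Kalman
condition holds. -/
theorem local_controllability_constraints {n m : ℕ}
    (A : Matrix (Fin n) (Fin n) ℝ) (B : Matrix (Fin n) (Fin m) ℝ)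
    (Ω : Set (Fin m → ℝ)) (hΩmeas : MeasurableSet Ω) (hΩ : (0 : Fin m → ℝ) ∈ interior Ω) :
    ((kalmanMatrix A B).rank = n →
      ∀ (x₀ : Fin n → ℝ) (T : ℝ), 0 < T →
        NormedSpace.exp (T • A) *ᵥ x₀ ∈ interior (accSet A B Ω x₀ T)) ∧
    ((∃ (x₀ : Fin n → ℝ) (T : ℝ), 0 < T ∧
        NormedSpace.exp (T • A) *ᵥ x₀ ∈ interior (accSet A B Ω x₀ T)) →
      (kalmanMatrix A B).rank = n) := by
  constructor
  · intro hrank x₀ T hT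
    exact LocCtrl.forward_dir A B hrank Ω hΩ x₀ hT
  · rintro ⟨x₀, T, hT, hmem⟩
    exact LocCtrl.converse_dir A B Ω x₀ hT hmem
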